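/- arXiv:1612.09337 — 7 statements merged into one kernel-verified Lean document; each statement's English description precedes it below -/
import Mathlib

section
/- Let A be an n×n integer matrix and S a nonzero proper linear subspace of ℝ^n invariant under A. If the determinant of the restriction of A to S is a rational number, then it is an integer. -/
/-!
With respect to a basis of `ℝⁿ` extending one of `S`, the matrix of `A` is block upper
triangular, so the characteristic polynomial of `A|_S` divides that of `A`, which is monic
with integer coefficients. The coefficients of a monic factor of such a polynomial are
algebraic integers, hence so is `det (A|_S) = ± χ_{A|_S}(0)`; being rational, it is an integer.
-/

open Polynomial Module

section

variable {R V : Type*} [CommRing R] [AddCommGroup V] [Module R V] {W : Submodule R V}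

theorem LinearMap.exists_toMatrix_sumQuot_eq_fromBlocks {m n : Type*} [Fintype m] [Fintype n]
    [DecidableEq m] [DecidableEq n] (bW : Basis m R W) (bQ : Basis n R (V ⧸ W))
    (e : V →ₗ[R] V) (he : W ≤ W.comap e) :
    ∃ B, toMatrix (bW.sumQuot bQ) (bW.sumQuot bQ) e =
      Matrix.fromBlocks (toMatrix bW bW (e.restrict he)) B 0
        (toMatrix bQ bQ (W.mapQ W e he)) := by
  refine ⟨Matrix.of fun i l ↦ (bW.sumQuot bQ).repr (e (bW.sumQuot bQ (.inr l))) (.inl i), ?_⟩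
  ext (i | j) (k | l)
  · simp only [LinearMap.toMatrix_apply, Basis.sumQuot_inl, Matrix.fromBlocks_apply₁₁]
    exact Basis.sumQuot_repr_inl_of_mem bW bQ _ _ i
  · simp [LinearMap.toMatrix_apply]
  · suffices W.mkQ (e (bW k)) = 0 by simp [LinearMap.toMatrix_apply, this]
    rw [← LinearMap.mem_ker, Submodule.ker_mkQ]
    exact he (bW k).2
  · simp only [LinearMap.toMatrix_apply, Basis.sumQuot_repr_inr, Matrix.fromBlocks_apply₂₂]
    rw [← Basis.sumQuot_inr bW bQ l, W.mapQ_apply]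
    simp

theorem LinearMap.charpoly_eq_charpoly_restrict_mul_charpoly_mapQ [Module.Free R V]
    [Module.Finite R V] [Module.Free R W] [Module.Finite R W] [Module.Free R (V ⧸ W)]
    [Module.Finite R (V ⧸ W)] (e : V →ₗ[R] V) (he : W ≤ W.comap e) :
    e.charpoly = (e.restrict he).charpoly * (W.mapQ W e he).charpoly := by
  classical
  let bW := Module.Free.chooseBasis R W
  let bQ := Module.Free.chooseBasis R (V ⧸ W)
  obtain ⟨B, hB⟩ := e.exists_toMatrix_sumQuot_eq_fromBlocks bW bQ he
  rw [← e.charpoly_toMatrix (bW.sumQuot bQ), hB, Matrix.charpoly_fromBlocks_zero₂₁,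
    charpoly_toMatrix, charpoly_toMatrix]

end

theorem LinearMap.charpoly_restrict_dvd {K V : Type*} [Field K] [AddCommGroup V] [Module K V]
    [FiniteDimensional K V] {W : Submodule K V} (e : V →ₗ[K] V) (he : W ≤ W.comap e) :
    (e.restrict he).charpoly ∣ e.charpoly :=
  Dvd.intro _ (e.charpoly_eq_charpoly_restrict_mul_charpoly_mapQ he).symm

theorem LinearMap.isIntegral_det_of_charpoly_dvd {R S M : Type*} [CommRing R] [CommRing S]
    [Algebra R S] [AddCommGroup M] [Module S M] [Module.Free S M] [Module.Finite S M]
    (f : M →ₗ[S] M) {p : R[X]} (hp : p.Monic) (hf : f.charpoly ∣ p.map (algebraMap R S)) :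
    IsIntegral R (LinearMap.det f) := by
  rw [LinearMap.det_eq_sign_charpoly_coeff]
  exact (isIntegral_one.neg.pow _).mul (isIntegral_coeff_of_dvd p _ hp f.charpoly_monic hf 0)

theorem Rat.exists_intCast_eq_of_isIntegral_cast {K : Type*} [Field K] [CharZero K] {q : ℚ}
    (hq : IsIntegral ℤ (q : K)) : ∃ m : ℤ, (q : K) = m := by
  have : IsIntegral ℤ q :=
    (isIntegral_algebraMap_iff (algebraMap ℚ K).injective).mp (by simpa using hq)
  obtain ⟨m, hm⟩ := IsIntegrallyClosed.isIntegral_iff.mp this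
  exact ⟨m, by rw [← hm, eq_intCast, Rat.cast_intCast]⟩

theorem det_restrict_int_of_rat_general
    (n : ℕ) (A : Matrix (Fin n) (Fin n) ℤ)
    (S : Submodule ℝ (Fin n → ℝ))
    (hinv : ∀ v ∈ S, Matrix.toLin' (A.map (Int.cast : ℤ → ℝ)) v ∈ S)
    (hQ : ∃ q : ℚ,
      LinearMap.det ((Matrix.toLin' (A.map (Int.cast : ℤ → ℝ))).restrict hinv) = (q : ℝ)) :
    ∃ m : ℤ,
      LinearMap.det ((Matrix.toLin' (A.map (Int.cast : ℤ → ℝ))).restrict hinv) = (m : ℝ) := by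
  obtain ⟨q, hq⟩ := hQ
  have hdvd : ((Matrix.toLin' (A.map (Int.cast : ℤ → ℝ))).restrict hinv).charpoly ∣
      A.charpoly.map (algebraMap ℤ ℝ) := by
    rw [← Matrix.charpoly_map, ← Matrix.charpoly_toLin']
    exact LinearMap.charpoly_restrict_dvd _ hinv
  have hint : IsIntegral ℤ (q : ℝ) :=
    hq ▸ LinearMap.isIntegral_det_of_charpoly_dvd _ A.charpoly_monic hdvd
  rw [hq]
  exact Rat.exists_intCast_eq_of_isIntegral_cast hint

/-- If `A` is an `n×n` integer matrix, `S` a nonzero proper `A`-invariant subspace of `ℝⁿ`,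
and the determinant of the restriction of `A` to `S` is rational, then it is an integer. -/
theorem det_restrict_int_of_rat
    (n : ℕ) (A : Matrix (Fin n) (Fin n) ℤ)
    (S : Submodule ℝ (Fin n → ℝ)) (hS0 : S ≠ ⊥) (hStop : S ≠ ⊤)
    (hinv : ∀ v ∈ S, Matrix.toLin' (A.map (Int.cast : ℤ → ℝ)) v ∈ S)
    (hQ : ∃ q : ℚ,
      LinearMap.det ((Matrix.toLin' (A.map (Int.cast : ℤ → ℝ))).restrict hinv) = (q : ℝ)) :
    ∃ m : ℤ,
      LinearMap.det ((Matrix.toLin' (A.map (Int.cast : ℤ → ℝ))).restrict hinv) = (m : ℝ) :=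
  det_restrict_int_of_rat_general n A S hinv hQ
end

section
/- Let A be an n×n integer matrix and S a nonzero proper A-invariant subspace of ℝ^n. Then there exists an A-invariant subspace W of ℝ^n such that det(A) = det(A|_S) · det(A|_W). -/
/-!
Over an infinite field the characteristic polynomial is multiplicative along an invariant
subspace: evaluate the corresponding determinant identity at every scalar. Every monic divisor
`g` of the characteristic polynomial of `f` is then the characteristic polynomial of `f` on some
invariant subspace. Take a monic irreducible factor `p` of `g`. A root of `p` in the algebraic
closure is an eigenvalue of `f`, so `p(f)` is singular and kills some `v ≠ 0`; the cyclic
subspace `K[f] v` has characteristic polynomial `p`, and one recurses in the quotient by it.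
Applied to the map induced on `ℝⁿ / S`, this gives an invariant `W` on which `A` has the same
determinant as on `ℝⁿ / S`, and `det A = det (A|S) · det (A on ℝⁿ / S)`.
-/

open Polynomial Module

namespace LinearMap

section CommRing

variable {R M N : Type*} [CommRing R] [AddCommGroup M] [Module R M] [Free R M] [Module.Finite R M]
  [AddCommGroup N] [Module R N] [Free R N] [Module.Finite R N]

theorem det_eq_det_of_charpoly_eq [Nontrivial R] {f : End R M} {g : End R N}
    (h : f.charpoly = g.charpoly) : f.det = g.det := by
  rw [det_eq_sign_charpoly_coeff, det_eq_sign_charpoly_coeff, ← charpoly_natDegree f,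
    ← charpoly_natDegree g, h]

theorem charpoly_eq_of_semiconj (e : M ≃ₗ[R] N) {f : End R M} {g : End R N}
    (h : Function.Semiconj e f g) : f.charpoly = g.charpoly := by
  have : g = e.conj f := by
    ext x
    simpa [LinearEquiv.conj_apply] using (h (e.symm x)).symm
  rw [this, LinearEquiv.charpoly_conj]

end CommRing

variable {K V : Type*} [Field K] [Infinite K] [AddCommGroup V] [Module K V] [FiniteDimensional K V]

theorem charpoly_eq_charpoly_restrict_mul_charpoly_mapQ_s2 (f : End K V) {S : Submodule K V}
    (hS : ∀ x ∈ S, f x ∈ S) :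
    f.charpoly = (f.restrict hS).charpoly * (S.mapQ S f hS).charpoly := by
  refine Polynomial.funext fun t => ?_
  have hS' : ∀ x ∈ S, (algebraMap K (End K V) t - f) x ∈ S := fun x hx =>
    S.sub_mem (S.smul_mem t hx) (hS x hx)
  rw [eval_mul, eval_charpoly, eval_charpoly, eval_charpoly, det_eq_det_mul_det S _ hS']
  congr 2
  ext x
  simp

theorem charpoly_restrict_comap_mkQ (f : End K V) {S : Submodule K V} (hS : ∀ x ∈ S, f x ∈ S)
    {W : Submodule K (V ⧸ S)} (hW : ∀ x ∈ W, S.mapQ S f hS x ∈ W)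
    (hW' : ∀ x ∈ W.comap S.mkQ, f x ∈ W.comap S.mkQ) :
    (f.restrict hW').charpoly =
      (f.restrict hS).charpoly * ((S.mapQ S f hS).restrict hW).charpoly := by
  set S' := S.comap (W.comap S.mkQ).subtype
  have hS' : ∀ x ∈ S', f.restrict hW' x ∈ S' := fun x hx => hS _ hx
  have hSW : S ≤ W.comap S.mkQ := fun x hx =>
    show S.mkQ x ∈ W by rw [S.mkQ_apply, (Submodule.Quotient.mk_eq_zero S).2 hx]; exact W.zero_mem
  let π : W.comap S.mkQ →ₗ[K] W :=
    (S.mkQ.comp (W.comap S.mkQ).subtype).codRestrict W fun x => x.2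
  have hπ : Function.Surjective π := by
    rintro ⟨y, hy⟩
    obtain ⟨x, rfl⟩ := S.mkQ_surjective y
    exact ⟨⟨x, hy⟩, rfl⟩
  have hker : S' = ker π := by
    ext x
    rw [LinearMap.mem_ker, ← Subtype.coe_inj]
    exact (Submodule.Quotient.mk_eq_zero S).symm
  let e : (W.comap S.mkQ ⧸ S') ≃ₗ[K] W :=
    (Submodule.quotEquivOfEq S' _ hker).trans (π.quotKerEquivOfSurjective hπ)
  rw [charpoly_eq_charpoly_restrict_mul_charpoly_mapQ_s2 _ hS',
    charpoly_eq_of_semiconj (g := f.restrict hS) (Submodule.comapSubtypeEquivOfLe hSW)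
      fun x => rfl,
    charpoly_eq_of_semiconj (g := (S.mapQ S f hS).restrict hW) e ?_]
  intro x
  induction x using Submodule.Quotient.induction_on with
  | _ x => rfl

end LinearMap

namespace Module.End

section CommRing

variable {R M : Type*} [CommRing R] [AddCommGroup M] [Module R M]

theorem aeval_restrict_apply (f : End R M) {S : Submodule R M} (hS : ∀ x ∈ S, f x ∈ S)
    (q : R[X]) (x : S) : (aeval (f.restrict hS) q x : M) = aeval f q x := by
  induction q using Polynomial.induction_on' with
  | add a b ha hb => simp [ha, hb]
  | monomial n a =>
    rw [aeval_monomial, aeval_monomial, mul_apply, mul_apply, pow_restrict]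
    rfl

noncomputable def cyclicSubspace (f : End R M) (v : M) : Submodule R M :=
  LinearMap.range ((LinearMap.applyₗ v).comp (aeval f).toLinearMap)

variable {f : End R M} {v : M}

theorem mem_cyclicSubspace {x : M} :
    x ∈ cyclicSubspace f v ↔ ∃ q : R[X], aeval f q v = x := by
  simp [cyclicSubspace]

theorem aeval_apply_mem_cyclicSubspace (q : R[X]) : aeval f q v ∈ cyclicSubspace f v :=
  mem_cyclicSubspace.2 ⟨q, rfl⟩

theorem self_mem_cyclicSubspace : v ∈ cyclicSubspace f v := by
  simpa using aeval_apply_mem_cyclicSubspace (f := f) (v := v) 1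

theorem apply_mem_cyclicSubspace : ∀ x ∈ cyclicSubspace f v, f x ∈ cyclicSubspace f v := by
  rintro _ ⟨q, rfl⟩
  have := aeval_apply_mem_cyclicSubspace (f := f) (v := v) (X * q)
  rwa [map_mul, mul_apply, aeval_X] at this

end CommRing

section Field

variable {K V : Type*} [Field K] [AddCommGroup V] [Module K V] {f : End K V} {v : V}

theorem finrank_cyclicSubspace_le {p : K[X]} (hp : p.Monic) (hpv : aeval f p v = 0) :
    finrank K (cyclicSubspace f v) ≤ p.natDegree := by
  have hle : cyclicSubspace f v ≤
      (degreeLT K p.natDegree).map ((LinearMap.applyₗ v).comp (aeval f).toLinearMap) := by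
    rintro _ ⟨q, rfl⟩
    refine ⟨q %ₘ p, mem_degreeLT.2 ?_, ?_⟩
    · exact (degree_modByMonic_lt q hp).trans_le degree_le_natDegree
    · conv_rhs => rw [← modByMonic_add_div q p, mul_comm]
      simp [mul_apply, hpv]
  calc finrank K (cyclicSubspace f v)
      ≤ finrank K (degreeLT K p.natDegree) :=
        (Submodule.finrank_mono hle).trans (Submodule.finrank_map_le _ _)
    _ = p.natDegree := by simp [(degreeLTEquiv K p.natDegree).finrank_eq]

variable [FiniteDimensional K V]

theorem charpoly_restrict_cyclicSubspace {p : K[X]} (hp : p.Monic) (hirr : Irreducible p)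
    (hv : v ≠ 0) (hpv : aeval f p v = 0) :
    (f.restrict (apply_mem_cyclicSubspace (v := v))).charpoly = p := by
  set g := f.restrict (apply_mem_cyclicSubspace (v := v))
  have hg : aeval g p = 0 := by
    ext ⟨_, q, rfl⟩
    rw [LinearMap.zero_apply, Submodule.coe_zero, aeval_restrict_apply]
    simp only [LinearMap.coe_comp, Function.comp_apply, AlgHom.toLinearMap_apply,
      LinearMap.applyₗ_apply_apply, ← mul_apply, ← map_mul]
    rw [mul_comm, map_mul, mul_apply, hpv, map_zero]
  have : Nontrivial (cyclicSubspace f v) := Submodule.nontrivial_iff_ne_bot.2 <|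
    (Submodule.ne_bot_iff _).2 ⟨v, self_mem_cyclicSubspace, hv⟩
  have hmin : minpoly K g = p := (minpoly.eq_of_irreducible_of_monic hirr hg hp).symm
  refine eq_of_monic_of_dvd_of_natDegree_le hp g.charpoly_monic (hmin ▸ g.minpoly_dvd_charpoly) ?_
  rw [g.charpoly_natDegree]
  exact finrank_cyclicSubspace_le hp hpv

theorem exists_ne_zero_aeval_apply_eq_zero_of_dvd_charpoly (f : End K V) {p : K[X]}
    (hp : 0 < p.degree) (hdvd : p ∣ f.charpoly) : ∃ v ≠ 0, aeval f p v = 0 := by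
  let L := AlgebraicClosure K
  obtain ⟨μ, hμ⟩ :=
    IsAlgClosed.exists_root (p.map (algebraMap K L)) (by rw [degree_map]; exact hp.ne')
  have hroot : (f.baseChange L).charpoly.IsRoot μ := by
    rw [LinearMap.charpoly_baseChange]
    exact eval_eq_zero_of_dvd_of_eval_eq_zero (map_dvd _ hdvd) hμ
  obtain ⟨w, hw⟩ := (hasEigenvalue_iff_isRoot_charpoly (f.baseChange L) μ).2 hroot
    |>.exists_hasEigenvector
  have hbc : (aeval f p).baseChange L = aeval (f.baseChange L) (p.map (algebraMap K L)) := by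
    rw [aeval_map_algebraMap]
    exact (aeval_algHom_apply (baseChangeHom K L V) f p).symm
  have hdet : (aeval f p).det = 0 := by
    apply (algebraMap K L).injective
    rw [← LinearMap.det_baseChange, map_zero, hbc, LinearMap.det_eq_zero_iff_ker_ne_bot]
    refine (Submodule.ne_bot_iff _).2 ⟨w, ?_, hw.2⟩
    rw [LinearMap.mem_ker, aeval_apply_of_hasEigenvector hw, hμ.eq_zero, zero_smul]
  obtain ⟨v, hv, hv0⟩ := SetLike.exists_of_lt (LinearMap.bot_lt_ker_of_det_eq_zero hdet)
  exact ⟨v, by simpa using hv0, hv⟩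

end Field

theorem exists_charpoly_restrict_eq_of_dvd_charpoly {K V : Type*} [Field K] [Infinite K]
    [AddCommGroup V] [Module K V] [FiniteDimensional K V] (f : End K V) {g : K[X]}
    (hg : g.Monic) (hdvd : g ∣ f.charpoly) :
    ∃ (W : Submodule K V) (hW : ∀ x ∈ W, f x ∈ W), (f.restrict hW).charpoly = g := by
  by_cases hunit : IsUnit g
  · refine ⟨⊥, fun x hx => by simp_all, ?_⟩
    rw [hg.isUnit_iff.1 hunit, ← (LinearMap.charpoly_monic _).natDegree_eq_zero,
      LinearMap.charpoly_natDegree, finrank_bot]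
  obtain ⟨p, hp, hirr, g', rfl⟩ := exists_monic_irreducible_factor g hunit
  obtain ⟨v, hv, hpv⟩ := exists_ne_zero_aeval_apply_eq_zero_of_dvd_charpoly f
    (degree_pos_of_irreducible hirr) ((dvd_mul_right p g').trans hdvd)
  have hL := charpoly_restrict_cyclicSubspace hp hirr hv hpv
  set L := cyclicSubspace f v
  have hquot : g' ∣ (L.mapQ L f apply_mem_cyclicSubspace).charpoly := by
    rwa [LinearMap.charpoly_eq_charpoly_restrict_mul_charpoly_mapQ_s2 f apply_mem_cyclicSubspace,
      hL, mul_dvd_mul_iff_left hp.ne_zero] at hdvd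
  have : g'.natDegree < (p * g').natDegree := by
    rw [hp.natDegree_mul' (hp.of_mul_monic_left hg).ne_zero]
    linarith [hirr.natDegree_pos]
  obtain ⟨W, hW, hWg⟩ :=
    exists_charpoly_restrict_eq_of_dvd_charpoly _ (hp.of_mul_monic_left hg) hquot
  have hW' : ∀ x ∈ W.comap L.mkQ, f x ∈ W.comap L.mkQ := fun x hx => hW _ hx
  exact ⟨_, hW', by rw [LinearMap.charpoly_restrict_comap_mkQ f _ hW hW', hL, hWg]⟩
termination_by g.natDegree

end Module.End

theorem exists_complement_det_mul_general
    (n : ℕ) (A : Matrix (Fin n) (Fin n) ℤ)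
    (S : Submodule ℝ (Fin n → ℝ))
    (hinv : ∀ v ∈ S, Matrix.toLin' (A.map (Int.cast : ℤ → ℝ)) v ∈ S) :
    ∃ (W : Submodule ℝ (Fin n → ℝ))
      (hW : ∀ v ∈ W, Matrix.toLin' (A.map (Int.cast : ℤ → ℝ)) v ∈ W),
      (A.map (Int.cast : ℤ → ℝ)).det =
        LinearMap.det ((Matrix.toLin' (A.map (Int.cast : ℤ → ℝ))).restrict hinv) *
        LinearMap.det ((Matrix.toLin' (A.map (Int.cast : ℤ → ℝ))).restrict hW) := by
  set f := Matrix.toLin' (A.map (Int.cast : ℤ → ℝ))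
  obtain ⟨W, hW, hWS⟩ := Module.End.exists_charpoly_restrict_eq_of_dvd_charpoly f
    (LinearMap.charpoly_monic (S.mapQ S f hinv))
    (Dvd.intro_left _ (f.charpoly_eq_charpoly_restrict_mul_charpoly_mapQ_s2 hinv).symm)
  refine ⟨W, hW, ?_⟩
  rw [← LinearMap.det_toLin', LinearMap.det_eq_det_mul_det S f hinv,
    LinearMap.det_eq_det_of_charpoly_eq hWS]

/-- If `A` is an `n×n` integer matrix and `S` a nonzero proper `A`-invariant subspace of `ℝⁿ`,
then there is an `A`-invariant subspace `W` with `det A = det(A|S) · det(A|W)`. -/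
theorem exists_complement_det_mul
    (n : ℕ) (A : Matrix (Fin n) (Fin n) ℤ)
    (S : Submodule ℝ (Fin n → ℝ)) (hS0 : S ≠ ⊥) (hStop : S ≠ ⊤)
    (hinv : ∀ v ∈ S, Matrix.toLin' (A.map (Int.cast : ℤ → ℝ)) v ∈ S) :
    ∃ (W : Submodule ℝ (Fin n → ℝ))
      (hW : ∀ v ∈ W, Matrix.toLin' (A.map (Int.cast : ℤ → ℝ)) v ∈ W),
      (A.map (Int.cast : ℤ → ℝ)).det =
        LinearMap.det ((Matrix.toLin' (A.map (Int.cast : ℤ → ℝ))).restrict hinv) *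
        LinearMap.det ((Matrix.toLin' (A.map (Int.cast : ℤ → ℝ))).restrict hW) :=
  exists_complement_det_mul_general n A S hinv
end

section
/- Let A be an n×n integer matrix and S a nonzero proper A-invariant subspace of ℝ^n. If det(A|_S) is a nonzero integer, then det(A|_S) divides det(A); in particular |det(A|_S)| ≤ |det(A)| when det(A) ≠ 0. -/
/-! The map induced by `A` on `ℝⁿ ⧸ S` has a characteristic polynomial dividing the monic integer
polynomial `charpoly A`, so its constant coefficient, and with it `det (A mod S)`, is an algebraic
integer. As `det A = det (A|_S) * det (A mod S)`, the rational number `det A / m` is an algebraic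
integer, hence an integer. -/

open Polynomial

namespace LinearMap

variable {R V : Type*} [CommRing R] [AddCommGroup V] [Module R V] {W : Submodule R V}
  {m n : Type*} [Fintype m] [Fintype n] [DecidableEq m] [DecidableEq n]

theorem toMatrix_sumQuot (bW : Module.Basis m R W) (bQ : Module.Basis n R (V ⧸ W))
    (e : V →ₗ[R] V) (he : W ≤ W.comap e) :
    toMatrix (bW.sumQuot bQ) (bW.sumQuot bQ) e =
      Matrix.fromBlocks (toMatrix bW bW (e.restrict he))
        (toMatrix (bW.sumQuot bQ) (bW.sumQuot bQ) e).toBlocks₁₂ 0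
        (toMatrix bQ bQ (W.mapQ W e he)) := by
  ext (i | i) (j | j)
  · rw [Matrix.fromBlocks_apply₁₁, toMatrix_apply, toMatrix_apply, Module.Basis.sumQuot_inl,
      Module.Basis.sumQuot_repr_inl_of_mem bW bQ (e (bW j)) (he (bW j).2) i, restrict_apply]
  · rw [Matrix.fromBlocks_apply₁₂, Matrix.toBlocks₁₂, Matrix.of_apply]
  · rw [Matrix.fromBlocks_apply₂₁, toMatrix_apply, Module.Basis.sumQuot_inl]
    exact Module.Basis.sumQuot_repr_inr_of_mem bW bQ _ (he (bW j).2) i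
  · rw [Matrix.fromBlocks_apply₂₂, toMatrix_apply, toMatrix_apply, Module.Basis.sumQuot_repr_inr,
      ← Module.Basis.sumQuot_inr bW bQ j, Submodule.mapQ_apply, Submodule.mkQ_apply]

variable [Module.Free R V] [Module.Finite R V] [Module.Free R W] [Module.Finite R W]
  [Module.Free R (V ⧸ W)]

theorem charpoly_eq_charpoly_restrict_mul_charpoly_mapQ_s3 (e : V →ₗ[R] V) (he : W ≤ W.comap e) :
    e.charpoly = (e.restrict he).charpoly * (W.mapQ W e he).charpoly := by
  classical
  let bW := Module.Free.chooseBasis R W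
  let bQ := Module.Free.chooseBasis R (V ⧸ W)
  rw [← charpoly_toMatrix e (bW.sumQuot bQ), toMatrix_sumQuot bW bQ e he,
    Matrix.charpoly_fromBlocks_zero₂₁, charpoly_toMatrix, charpoly_toMatrix]

end LinearMap

theorem LinearMap.isIntegral_det_of_charpoly_dvd_map {R K V : Type*} [CommRing R] [Field K]
    [Algebra R K] [AddCommGroup V] [Module K V] [FiniteDimensional K V] (e : V →ₗ[K] V)
    {P : R[X]} (hP : P.Monic) (h : e.charpoly ∣ P.map (algebraMap R K)) :
    IsIntegral R (LinearMap.det e) := by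
  obtain ⟨⟨c, hc⟩, hc_eq⟩ := (lifts_iff_coeff_lifts _).mp
    (integralClosure.mem_lifts_of_monic_of_dvd_map K hP e.charpoly_monic h) 0
  rw [det_eq_sign_charpoly_coeff, ← hc_eq]
  exact (isIntegral_one.neg.pow _).mul hc

theorem Int.dvd_of_intCast_eq_mul_of_isIntegral {K : Type*} [Field K] [CharZero K] {m x : ℤ}
    {y : K} (hy : IsIntegral ℤ y) (h : (x : K) = m * y) : m ∣ x := by
  rcases eq_or_ne m 0 with rfl | hm
  · simp_all
  have hy_rat : y = ((x / m : ℚ) : K) := by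
    push_cast
    rw [h]
    field_simp
  obtain ⟨k, hk⟩ := IsIntegrallyClosed.isIntegral_iff.mp
    (IsIntegral.tower_bot_of_field (A := ℚ) (hy_rat ▸ hy))
  refine ⟨k, Int.cast_injective (α := ℚ) ?_⟩
  rw [algebraMap_int_eq, eq_intCast] at hk
  push_cast
  rw [hk]
  field_simp

theorem det_restrict_dvd_det_general
    (n : ℕ) (A : Matrix (Fin n) (Fin n) ℤ)
    (S : Submodule ℝ (Fin n → ℝ))
    (hinv : ∀ v ∈ S, Matrix.toLin' (A.map (Int.cast : ℤ → ℝ)) v ∈ S)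
    (m : ℤ)
    (hm : LinearMap.det ((Matrix.toLin' (A.map (Int.cast : ℤ → ℝ))).restrict hinv) = (m : ℝ)) :
    m ∣ A.det ∧ (A.det ≠ 0 → |m| ≤ |A.det|) := by
  set f := Matrix.toLin' (A.map (Int.cast : ℤ → ℝ))
  have hcharpoly : f.charpoly = A.charpoly.map (algebraMap ℤ ℝ) := by
    rw [Matrix.charpoly_toLin']
    exact A.charpoly_map (Int.castRingHom ℝ)
  have hdet : (A.det : ℝ) = m * LinearMap.det (S.mapQ S f hinv) := by
    rw [← hm, ← LinearMap.det_eq_det_mul_det, LinearMap.det_toLin']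
    exact (Int.castRingHom ℝ).map_det A
  have hquot : IsIntegral ℤ (LinearMap.det (S.mapQ S f hinv)) :=
    (S.mapQ S f hinv).isIntegral_det_of_charpoly_dvd_map A.charpoly_monic
      (hcharpoly ▸ Dvd.intro_left _ (f.charpoly_eq_charpoly_restrict_mul_charpoly_mapQ_s3 hinv).symm)
  have hdvd := Int.dvd_of_intCast_eq_mul_of_isIntegral hquot hdet
  exact ⟨hdvd, fun h => Int.le_of_dvd (abs_pos.mpr h) ((abs_dvd_abs _ _).mpr hdvd)⟩

/-- If `A` is an `n×n` integer matrix, `S` a nonzero proper `A`-invariant subspace of `ℝⁿ`,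
and `det(A|S)` is a nonzero integer `m`, then `m` divides `det A`; in particular
`|det(A|S)| ≤ |det A|` when `det A ≠ 0`. -/
theorem det_restrict_dvd_det
    (n : ℕ) (A : Matrix (Fin n) (Fin n) ℤ)
    (S : Submodule ℝ (Fin n → ℝ)) (hS0 : S ≠ ⊥) (hStop : S ≠ ⊤)
    (hinv : ∀ v ∈ S, Matrix.toLin' (A.map (Int.cast : ℤ → ℝ)) v ∈ S)
    (m : ℤ) (hm0 : m ≠ 0)
    (hm : LinearMap.det ((Matrix.toLin' (A.map (Int.cast : ℤ → ℝ))).restrict hinv) = (m : ℝ)) :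
    m ∣ A.det ∧ (A.det ≠ 0 → |m| ≤ |A.det|) :=
  det_restrict_dvd_det_general n A S hinv m hm
end

section
/- Let H, G, K be groups with group morphisms α: H → G, β: G → K, φ: H → H, ψ: G → G, ν: K → K such that φ is an isomorphism, the sequence H → G → K → 0 is exact (β surjective and Im(α) = Ker(β)), and the diagram commutes (ψ∘α = α∘φ and ν∘β = β∘ψ). Then the index [G : ψ(G)] equals the index [K : ν(K)]. -/
/-! Since `φ` is onto, `α(H) = ψ(α(H)) ⊆ ψ(G)`, so `ker β ⊆ ψ(G)` by exactness. As `β` is onto,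
`ν(K) = ν(β(G)) = β(ψ(G))`, hence `β⁻¹(ν(K)) = ψ(G) · ker β = ψ(G)`. Pulling back a subgroup
along a surjection does not change its coset space, so `G ⧸ ψ(G) ≃ K ⧸ ν(K)`. -/

namespace QuotientGroup

variable {G K : Type*} [Group G] [Group K]

noncomputable def quotientComapEquivOfSurjective (f : G →* K) (hf : Function.Surjective f)
    (B : Subgroup K) : G ⧸ B.comap f ≃ K ⧸ B :=
  (Quotient.congrRight fun x y => by
      rw [leftRel_apply, Setoid.ker_def, Function.comp_apply, Function.comp_apply, QuotientGroup.eq,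
        Subgroup.mem_comap, map_mul, map_inv]).trans
    (Setoid.quotientKerEquivOfSurjective _ (mk_surjective.comp hf))

end QuotientGroup

namespace MonoidHom

variable {G G' H H' K K' : Type*} [Group G] [Group G'] [Group H] [Group H'] [Group K] [Group K']

theorem range_comp_of_surjective (g : H →* G) {f : H' →* H} (hf : Function.Surjective f) :
    (g.comp f).range = g.range := by
  rw [range_comp, range_eq_top_of_surjective f hf, ← range_eq_map]

theorem range_le_range_of_comp_eq_comp {α' : H' →* G'} {φ : H' →* H} {α : H →* G}
    {ψ : G' →* G} (hφ : Function.Surjective φ) (h : ψ.comp α' = α.comp φ) :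
    α.range ≤ ψ.range := by
  rw [← range_comp_of_surjective α hφ, ← h, range_comp]
  exact Subgroup.map_le_range ψ _

theorem comap_range_eq_of_comp_eq_comp {β' : G' →* K'} {ν : K' →* K} {β : G →* K}
    {ψ : G' →* G} (hβ' : Function.Surjective β') (h : ν.comp β' = β.comp ψ)
    (hker : β.ker ≤ ψ.range) : ν.range.comap β = ψ.range := by
  rw [← range_comp_of_surjective ν hβ', h, range_comp, Subgroup.comap_map_eq,
    sup_eq_left.mpr hker]

end MonoidHom

/-- Algebraic degree lemma: given a commutative diagram over the exact sequence
`H → G → K → 0` with `φ : H → H` an isomorphism, the index of `ψ(G)` in `G`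
equals the index of `ν(K)` in `K` (as cardinals of coset spaces). -/
theorem index_image_eq_of_exact_diagram
    {H G K : Type u} [Group H] [Group G] [Group K]
    (α : H →* G) (β : G →* K) (φ : H →* H) (ψ : G →* G) (ν : K →* K)
    (hφ : Function.Bijective φ)
    (hβsurj : Function.Surjective β) (hexact : α.range = β.ker)
    (hc1 : ψ.comp α = α.comp φ) (hc2 : ν.comp β = β.comp ψ) :
    Cardinal.mk (G ⧸ ψ.range) = Cardinal.mk (K ⧸ ν.range) := by
  have hker : β.ker ≤ ψ.range :=
    hexact ▸ MonoidHom.range_le_range_of_comp_eq_comp hφ.surjective hc1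
  rw [← MonoidHom.comap_range_eq_of_comp_eq_comp hβsurj hc2 hker]
  exact Cardinal.mk_congr (QuotientGroup.quotientComapEquivOfSurjective β hβsurj _)
end

section
/- Let f = (h,g) be a skew-product covering map of 𝕋^{n-1} × 𝕋¹ preserving Haar measure, with h a measure-preserving homeomorphism of 𝕋^{n-1}. Then for every x ∈ 𝕋^{n-1}, the circle map g_x(t) = g(x,t) preserves the Haar (Lebesgue) measure λ on 𝕋¹. -/
open MeasureTheory

/-!
Fix a continuous test function `φ` on the fibre and put `G x = ∫ φ (g x t) dt`, a continuous
function of `x`. Integrating `ψ (h x) * φ t` against the `f`-invariant product measure gives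
`∫ ψ (h x) * G x dx = (∫ ψ) * (∫ φ)`. As `h` is a measure-preserving homeomorphism, `ψ ∘ h` runs
through all continuous functions, so `G - ∫ φ` is orthogonal to every continuous function and,
being continuous, vanishes identically. Thus `(g x)_* λ` and `λ` agree on continuous functions.
-/

theorem ContinuousMap.integrable {X : Type*} [TopologicalSpace X] [CompactSpace X]
    [MeasurableSpace X] [OpensMeasurableSpace X] {μ : Measure X} [IsFiniteMeasure μ]
    (ψ : C(X, ℝ)) : Integrable ψ μ :=
  ψ.continuous.integrable_of_hasCompactSupport (.of_compactSpace _)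

theorem Continuous.eq_zero_of_forall_integral_mul_eq_zero {X : Type*} [TopologicalSpace X]
    [CompactSpace X] [MeasurableSpace X] [OpensMeasurableSpace X] {μ : Measure X}
    [IsFiniteMeasure μ] [μ.IsOpenPosMeasure] {u : X → ℝ} (hu : Continuous u)
    (h : ∀ ψ : C(X, ℝ), ∫ x, ψ x * u x ∂μ = 0) : u = 0 := by
  have hsq : Continuous fun x => u x * u x := hu.mul hu
  have hsq_ae : (fun x => u x * u x) =ᵐ[μ] 0 :=
    (integral_eq_zero_iff_of_nonneg (fun x => mul_self_nonneg (u x))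
      (ContinuousMap.integrable ⟨_, hsq⟩)).mp (h ⟨u, hu⟩)
  funext x
  exact mul_self_eq_zero.mp (congrFun ((hsq.ae_eq_iff_eq μ continuous_const).mp hsq_ae) x)

namespace MeasureTheory

theorem ext_of_forall_integral_continuousMap_eq {Y : Type*} [TopologicalSpace Y]
    [HasOuterApproxClosed Y] [MeasurableSpace Y] [BorelSpace Y]
    {ν₁ ν₂ : Measure Y} [IsFiniteMeasure ν₁] [IsFiniteMeasure ν₂]
    (h : ∀ φ : C(Y, ℝ), ∫ t, φ t ∂ν₁ = ∫ t, φ t ∂ν₂) : ν₁ = ν₂ :=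
  ext_of_forall_integral_eq_of_IsFiniteMeasure fun φ => h φ.toContinuousMap

section SkewProduct

variable {X Y : Type*} [TopologicalSpace X] [CompactSpace X] [MeasurableSpace X]
  [TopologicalSpace Y] [CompactSpace Y] [MeasurableSpace Y]
  {μ : Measure X} {ν : Measure Y} [IsFiniteMeasure μ] [IsFiniteMeasure ν]
  {g : X → Y → Y}

theorem MeasurePreserving.integral_mul_integral_fiber [OpensMeasurableSpace X]
    [OpensMeasurableSpace Y] {h : X → X}
    (hF : MeasurePreserving (fun p : X × Y => (h p.1, g p.1 p.2)) (μ.prod ν) (μ.prod ν))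
    (ψ : C(X, ℝ)) (φ : C(Y, ℝ)) :
    ∫ x, ψ (h x) * ∫ t, φ (g x t) ∂ν ∂μ = (∫ x, ψ x ∂μ) * ∫ t, φ t ∂ν := by
  have hint : Integrable (fun p : X × Y => ψ p.1 * φ p.2) (μ.prod ν) :=
    ψ.integrable.mul_prod φ.integrable
  have hint_comp : Integrable (fun p : X × Y => ψ (h p.1) * φ (g p.1 p.2)) (μ.prod ν) :=
    hF.integrable_comp_of_integrable hint
  calc ∫ x, ψ (h x) * ∫ t, φ (g x t) ∂ν ∂μ
      = ∫ p, ψ (h p.1) * φ (g p.1 p.2) ∂(μ.prod ν) := by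
        rw [integral_prod _ hint_comp]
        simp only [integral_const_mul]
    _ = ∫ p, ψ p.1 * φ p.2 ∂(μ.prod ν) := by
        conv_rhs => rw [← hF.map_eq]
        exact (integral_map hF.measurable.aemeasurable
          (hF.map_eq ▸ hint.aestronglyMeasurable)).symm
    _ = (∫ x, ψ x ∂μ) * ∫ t, φ t ∂ν := integral_prod_mul _ _

theorem MeasurePreserving.integral_comp_fiber_eq_integral [BorelSpace X] [T2Space X]
    [FirstCountableTopology X] [μ.IsOpenPosMeasure] [OpensMeasurableSpace Y]
    {h : X ≃ₜ X}
    (hF : MeasurePreserving (fun p : X × Y => (h p.1, g p.1 p.2)) (μ.prod ν) (μ.prod ν))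
    (hh : MeasurePreserving h μ μ) (hg : Continuous (Function.uncurry g))
    (φ : C(Y, ℝ)) (x : X) : ∫ t, φ (g x t) ∂ν = ∫ t, φ t ∂ν := by
  set c := ∫ t, φ t ∂ν
  set G : X → ℝ := fun x => ∫ t, φ (g x t) ∂ν
  have hG : Continuous G := by
    simpa only [G, Measure.restrict_univ] using
      continuous_parametric_integral_of_continuous (μ := ν) (f := fun x t => φ (g x t))
        (φ.continuous.comp hg) isCompact_univ
  have horth : ∀ χ : C(X, ℝ), ∫ y, χ y * (G y - c) ∂μ = 0 := by
    intro χ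
    have hχ := hF.integral_mul_integral_fiber (χ.comp (h.symm : C(X, X))) φ
    have hχh : ∫ y, χ (h.symm y) ∂μ = ∫ y, χ y ∂μ := by
      simpa using (hh.integral_comp h.measurableEmbedding (fun y => χ (h.symm y))).symm
    simp only [ContinuousMap.comp_apply, ContinuousMap.coe_mk, Homeomorph.symm_apply_apply,
      hχh] at hχ
    simp only [mul_sub]
    have hχG : Integrable (fun y => χ y * G y) μ := (χ * ⟨G, hG⟩).integrable
    rw [integral_sub hχG (χ.integrable.mul_const c), integral_mul_const, hχ, sub_self]
  have hG_const := (hG.sub continuous_const).eq_zero_of_forall_integral_mul_eq_zero horth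
  exact sub_eq_zero.mp (congrFun hG_const x)

theorem MeasurePreserving.fiber_of_skewProduct [BorelSpace X] [T2Space X]
    [FirstCountableTopology X] [μ.IsOpenPosMeasure] [HasOuterApproxClosed Y] [BorelSpace Y]
    {h : X ≃ₜ X}
    (hF : MeasurePreserving (fun p : X × Y => (h p.1, g p.1 p.2)) (μ.prod ν) (μ.prod ν))
    (hh : MeasurePreserving h μ μ) (hg : Continuous (Function.uncurry g))
    (x : X) : MeasurePreserving (g x) ν ν := by
  have hgx : Continuous (g x) := hg.comp (Continuous.prodMk_right x)
  refine ⟨hgx.measurable, ext_of_forall_integral_continuousMap_eq fun φ => ?_⟩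
  rw [integral_map hgx.aemeasurable φ.continuous.aestronglyMeasurable]
  exact hF.integral_comp_fiber_eq_integral hh hg φ x

end SkewProduct

end MeasureTheory

/-- If a skew-product covering map `f(x,t) = (h(x), g(x,t))` preserves Haar measure and
the base map `h` is a Haar-measure-preserving homeomorphism, then every fiber map
`g_x : 𝕋¹ → 𝕋¹` preserves Lebesgue (Haar) measure on the circle. -/
theorem fiber_maps_preserve_haar
    (m : ℕ)
    (h : (Fin m → AddCircle (1 : ℝ)) ≃ₜ (Fin m → AddCircle (1 : ℝ)))
    (g : (Fin m → AddCircle (1 : ℝ)) → AddCircle (1 : ℝ) → AddCircle (1 : ℝ))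
    (f : (Fin m → AddCircle (1 : ℝ)) × AddCircle (1 : ℝ) →
         (Fin m → AddCircle (1 : ℝ)) × AddCircle (1 : ℝ))
    (hf : ∀ x t, f (x, t) = (h x, g x t))
    (hcovf : IsCoveringMap f)
    (hpresh : MeasurePreserving h volume volume)
    (hpresf : MeasurePreserving f volume volume) :
    ∀ x, MeasurePreserving (g x) volume volume := by
  have hf_eq : f = fun p => (h p.1, g p.1 p.2) := funext fun p => hf p.1 p.2
  have hg : Continuous (Function.uncurry g) := by
    have hg_eq : Function.uncurry g = Prod.snd ∘ f := funext fun ⟨x, t⟩ => by simp [hf]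
    exact hg_eq ▸ continuous_snd.comp hcovf.continuous
  subst hf_eq
  exact hpresf.fiber_of_skewProduct hpresh hg
end

section
/- Let f: 𝕋^n → 𝕋^n be a measure-preserving (for Haar measure) covering map. Then f is not topologically transitive if and only if there exist open sets U, V ⊆ 𝕋^n with f^{-1}(U) = U, f^{-1}(V) = V, and U equal to the interior of 𝕋^n \ V. -/
/-!
If `f` has no dense orbit then, by the Baire category theorem, there are nonempty open sets `A`
and `B` such that no orbit starting in `B` ever enters `A`. The set `W` of points whose orbit enters
`A` is open, contains `A`, misses `B`, and satisfies `f⁻¹' W ⊆ W`. Since `f` preserves the finite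
measure `μ`, the open set `W \ closure (f⁻¹' W)` is null, hence empty, so `closure W` is invariant
when `f` is also an open map; then `U = interior (closure W)` and `V = (closure W)ᶜ` are the
required regions. Conversely, an orbit meeting two disjoint forward-invariant open sets would
eventually lie in both.
-/

open MeasureTheory Set Function

theorem preimage_iUnion_iterate_preimage_subset {X : Type*} (f : X → X) (A : Set X) :
    f ⁻¹' ⋃ k : ℕ, f^[k] ⁻¹' A ⊆ ⋃ k : ℕ, f^[k] ⁻¹' A := by
  rw [preimage_iUnion]
  exact iUnion_mono' fun k => ⟨k + 1, by rw [iterate_succ, preimage_comp]⟩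

section Orbits

variable {X : Type*} [TopologicalSpace X] {f : X → X}

/-- Birkhoff's transitivity theorem. -/
theorem exists_dense_orbit_of_forall_exists_iterate_preimage_inter_nonempty
    [BaireSpace X] [SecondCountableTopology X] [Nonempty X] (hf : Continuous f)
    (h : ∀ A B : Set X, IsOpen A → IsOpen B → A.Nonempty → B.Nonempty →
      ∃ k, (f^[k] ⁻¹' A ∩ B).Nonempty) :
    ∃ z, Dense (range fun k : ℕ => f^[k] z) := by
  obtain ⟨b, hbc, hbempty, hb⟩ := TopologicalSpace.exists_countable_basis X
  have hopen (B : Set X) (hB : B ∈ b) : IsOpen (⋃ k, f^[k] ⁻¹' B) :=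
    isOpen_iUnion fun k => (hb.isOpen hB).preimage (hf.iterate k)
  have hdense (B : Set X) (hB : B ∈ b) : Dense (⋃ k, f^[k] ⁻¹' B) := by
    refine dense_iff_inter_open.2 fun t ht htne => ?_
    obtain ⟨k, x, hxB, hxt⟩ :=
      h B t (hb.isOpen hB) ht (nonempty_iff_ne_empty.2 (ne_of_mem_of_not_mem hB hbempty)) htne
    exact ⟨x, hxt, mem_iUnion.2 ⟨k, hxB⟩⟩
  obtain ⟨z, hz⟩ := (dense_biInter_of_isOpen hopen hbc hdense).nonempty
  refine ⟨z, hb.dense_iff.2 fun B hB _ => ?_⟩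
  obtain ⟨k, hk⟩ := mem_iUnion.1 (mem_iInter₂.1 hz B hB)
  exact ⟨f^[k] z, hk, mem_range_self k⟩

theorem not_dense_orbit_of_mapsTo {U V : Set X} (hU : IsOpen U) (hV : IsOpen V)
    (hUne : U.Nonempty) (hVne : V.Nonempty) (hUV : Disjoint U V)
    (hfU : MapsTo f U U) (hfV : MapsTo f V V) (z : X) :
    ¬ Dense (range fun k : ℕ => f^[k] z) := by
  intro hz
  obtain ⟨_, hkU, k, rfl⟩ := hz.inter_open_nonempty U hU hUne
  obtain ⟨_, hmV, m, rfl⟩ := hz.inter_open_nonempty V hV hVne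
  have hU' : f^[m + k] z ∈ U := by
    rw [iterate_add_apply]; exact hfU.iterate m hkU
  have hV' : f^[m + k] z ∈ V := by
    rw [add_comm, iterate_add_apply]; exact hfV.iterate k hmV
  exact hUV.notMem_of_mem_left hU' hV'

end Orbits

section Measure

variable {X : Type*} [TopologicalSpace X] [MeasurableSpace X] {μ : Measure X}

theorem IsOpen.subset_closure_of_measure_sdiff_eq_zero [μ.IsOpenPosMeasure] {O S : Set X}
    (hO : IsOpen O) (h : μ (O \ S) = 0) : O ⊆ closure S := by
  have hnull : μ (O \ closure S) = 0 :=
    measure_mono_null (sdiff_subset_sdiff_right subset_closure) h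
  exact sdiff_eq_empty.1 ((hO.sdiff isClosed_closure).eq_empty_of_measure_zero hnull)

theorem MeasureTheory.MeasurePreserving.closure_preimage_eq_of_preimage_subset
    [OpensMeasurableSpace X] [IsFiniteMeasure μ] [μ.IsOpenPosMeasure] {f : X → X}
    (hf : MeasurePreserving f μ μ) {W : Set X} (hW : IsOpen W) (hfW : f ⁻¹' W ⊆ W) :
    closure (f ⁻¹' W) = closure W := by
  have hnull : μ (W \ f ⁻¹' W) = 0 := by
    rw [measure_sdiff hfW (hW.measurableSet.preimage hf.measurable).nullMeasurableSet
      (measure_ne_top _ _), hf.measure_preimage hW.measurableSet.nullMeasurableSet, tsub_self]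
  exact (closure_mono hfW).antisymm
    (closure_minimal (hW.subset_closure_of_measure_sdiff_eq_zero hnull) isClosed_closure)

end Measure

/-- A Haar-measure-preserving covering map of `𝕋ⁿ` is not topologically transitive
iff there are (nonempty) open invariant regions `U`, `V` with `U` equal to the
interior of the complement of `V`. -/
theorem not_transitive_iff_invariant_regions
    (n : ℕ)
    (f : (Fin n → AddCircle (1 : ℝ)) → (Fin n → AddCircle (1 : ℝ)))
    (hcov : IsCoveringMap f)
    (hpres : MeasurePreserving f volume volume) :
    (¬ ∃ z, Dense (Set.range fun k : ℕ => f^[k] z)) ↔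
      ∃ U V : Set (Fin n → AddCircle (1 : ℝ)),
        IsOpen U ∧ IsOpen V ∧ U.Nonempty ∧ V.Nonempty ∧
        f ⁻¹' U = U ∧ f ⁻¹' V = V ∧ U = interior Vᶜ := by
  have hcont := hcov.continuous
  have hopen := hcov.isOpenMap
  constructor
  · intro hnd
    obtain ⟨A, B, hA, hB, hAne, hBne, hAB⟩ : ∃ A B : Set (Fin n → AddCircle (1 : ℝ)),
        IsOpen A ∧ IsOpen B ∧ A.Nonempty ∧ B.Nonempty ∧ ∀ k, ¬ (f^[k] ⁻¹' A ∩ B).Nonempty := by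
      by_contra! h
      exact hnd (exists_dense_orbit_of_forall_exists_iterate_preimage_inter_nonempty hcont h)
    set W := ⋃ k : ℕ, f^[k] ⁻¹' A
    have hW : IsOpen W := isOpen_iUnion fun k => hA.preimage (hcont.iterate k)
    have hAW : A ⊆ W := subset_iUnion_of_subset 0 subset_rfl
    have hWB : Disjoint (closure W) B := by
      refine Disjoint.closure_left (disjoint_iUnion_left.2 fun k => ?_) hB
      exact disjoint_iff_inter_eq_empty.2 (not_nonempty_iff_eq_empty.1 (hAB k))
    have hinv : f ⁻¹' closure W = closure W := by
      rw [hopen.preimage_closure_eq_closure_preimage hcont,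
        hpres.closure_preimage_eq_of_preimage_subset hW
          (preimage_iUnion_iterate_preimage_subset f A)]
    refine ⟨interior (closure W), (closure W)ᶜ, isOpen_interior, isClosed_closure.isOpen_compl,
      hAne.mono (hAW.trans hW.subset_interior_closure), hBne.mono hWB.subset_compl_left, ?_,
      by rw [preimage_compl, hinv], by rw [compl_compl]⟩
    rw [hopen.preimage_interior_eq_interior_preimage hcont, hinv]
  · rintro ⟨U, V, hU, hV, hUne, hVne, hfU, hfV, rfl⟩ ⟨z, hz⟩
    exact not_dense_orbit_of_mapsTo hU hV hUne hVne
      (disjoint_compl_left.mono_left interior_subset) hfU.ge hfV.ge z hz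
end

section
/- Let f: 𝕋^n → 𝕋^n be a skew-product f = (h,g) with h a transitive homeomorphism of 𝕋^{n-1}, and suppose each fiber map satisfies: for every x ∈ 𝕋^{n-1} and every interval I ⊂ 𝕋¹, there exists k ≥ 0 such that the image of {x} × I under f^k is the whole fiber {h^k(x)} × 𝕋¹, with k depending only on the length of I. Then f is topologically transitive. -/
/-!
Iterating the skew product sends a fiber segment `{x} × I` onto the whole fiber over
`h^k x` at a time `k` depending only on `I`; as this forces `f` to be onto and `h` is
injective, the fiber maps of all iterates of `f` are onto as well. So, to
move an open box `B × I` into an open box `B' × W`, it suffices to move `h^k(B)` into `B'`,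
which transitivity of `h` provides. Transitivity of `f` then gives a dense orbit by the
Baire category theorem.
-/

open Set Function

def IsTopologicallyTransitive {α : Type*} [TopologicalSpace α] (f : α → α) : Prop :=
  ∀ U V : Set α, IsOpen U → U.Nonempty → IsOpen V → V.Nonempty →
    ∃ n : ℕ, (U ∩ f^[n] ⁻¹' V).Nonempty

theorem IsOpenMap.iterate {α : Type*} [TopologicalSpace α] {f : α → α} (hf : IsOpenMap f)
    (n : ℕ) : IsOpenMap f^[n] := by
  induction n with
  | zero => exact IsOpenMap.id
  | succ n ih => rw [iterate_succ]; exact ih.comp hf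

section Transitivity

variable {α : Type*} [TopologicalSpace α] {f : α → α}

theorem isTopologicallyTransitive_of_dense_orbit (hf : Continuous f) (hsurj : Surjective f)
    {x : α} (hx : Dense (range fun n : ℕ => f^[n] x)) : IsTopologicallyTransitive f := by
  intro U V hU hUne hV hVne
  obtain ⟨_, ⟨i, rfl⟩, hiU⟩ := hx.exists_mem_open hU hUne
  have hdense : Dense (range fun n : ℕ => f^[n] (f^[i] x)) := by
    have horbit :
        (range fun n : ℕ => f^[n] (f^[i] x)) = f^[i] '' range fun n : ℕ => f^[n] x := by
      rw [← range_comp]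
      congr 1
      funext n
      exact (Commute.iterate_iterate_self f n i).eq x
    rw [horbit]
    exact (hsurj.iterate i).denseRange.dense_image (hf.iterate i) hx
  obtain ⟨_, ⟨n, rfl⟩, hnV⟩ := hdense.exists_mem_open hV hVne
  exact ⟨n, f^[i] x, hiU, hnV⟩

/-- A point lies on a dense orbit as soon as its orbit meets every basic open set, and for each
basic open set these points form a dense open set. -/
theorem IsTopologicallyTransitive.exists_dense_orbit [BaireSpace α] [SecondCountableTopology α]
    [Nonempty α] (htr : IsTopologicallyTransitive f) (hf : Continuous f) :
    ∃ z, Dense (range fun n : ℕ => f^[n] z) := by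
  obtain ⟨b, hbc, hbne, hb⟩ := TopologicalSpace.exists_countable_basis α
  have hG : Dense (⋂ V ∈ b, ⋃ n : ℕ, f^[n] ⁻¹' V) := by
    refine dense_biInter_of_isOpen
      (fun V hV => isOpen_iUnion fun n => (hb.isOpen hV).preimage (hf.iterate n)) hbc
      (fun V hV => dense_iff_inter_open.2 fun U hU hUne => ?_)
    obtain ⟨n, z, hzU, hzV⟩ :=
      htr U V hU hUne (hb.isOpen hV) (nonempty_iff_ne_empty.2 fun h => hbne (h ▸ hV))
    exact ⟨z, hzU, mem_iUnion.2 ⟨n, hzV⟩⟩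
  obtain ⟨z, hz⟩ := hG.nonempty
  refine ⟨z, hb.dense_iff.2 fun V hV _ => ?_⟩
  obtain ⟨n, hn⟩ := mem_iUnion.1 (mem_iInter₂.1 hz V hV)
  exact ⟨f^[n] z, hn, n, rfl⟩

end Transitivity

section SkewProduct

variable {X Y : Type*} {h : X → X} {f : X × Y → X × Y}

theorem surjective_of_surjective_fiber_iterate (hs : Semiconj Prod.fst f h)
    (hh : Surjective h) {k : ℕ} (hk : k ≠ 0)
    (hfiber : ∀ x, Surjective fun t => (f^[k] (x, t)).2) : Surjective f := by
  have hsurj : Surjective f^[k] := by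
    rintro ⟨y, s⟩
    obtain ⟨x, rfl⟩ := hh.iterate k y
    obtain ⟨t, ht⟩ := hfiber x s
    exact ⟨(x, t), Prod.ext ((hs.iterate_right k).eq (x, t)) ht⟩
  obtain ⟨k, rfl⟩ := Nat.exists_eq_succ_of_ne_zero hk
  rw [iterate_succ'] at hsurj
  exact hsurj.of_comp

theorem exists_iterate_eq_of_surjective (hs : Semiconj Prod.fst f h) (hh : Injective h)
    (hf : Surjective f) (n : ℕ) (x : X) (s : Y) : ∃ t, f^[n] (x, t) = (h^[n] x, s) := by
  obtain ⟨⟨x', t⟩, hp⟩ := hf.iterate n (h^[n] x, s)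
  have hx : x' = x := hh.iterate n (by simpa [hp] using ((hs.iterate_right n).eq (x', t)).symm)
  exact ⟨t, hx ▸ hp⟩

variable [TopologicalSpace X] [TopologicalSpace Y]

theorem isTopologicallyTransitive_of_fiber_covering (hs : Semiconj Prod.fst f h)
    (htr : IsTopologicallyTransitive h) (hho : IsOpenMap h) (hhi : Injective h)
    (hf : Surjective f)
    (hcov : ∀ W : Set Y, IsOpen W → W.Nonempty →
      ∃ k : ℕ, ∀ x, (fun t => (f^[k] (x, t)).2) '' W = univ) :
    IsTopologicallyTransitive f := by
  rintro U V hU ⟨⟨x₀, t₀⟩, hU₀⟩ hV ⟨⟨x₁, t₁⟩, hV₁⟩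
  obtain ⟨B, W, hB, hW, hx₀, ht₀, hBW⟩ := isOpen_prod_iff.1 hU x₀ t₀ hU₀
  obtain ⟨B', W', hB', hW', hx₁, ht₁, hBW'⟩ := isOpen_prod_iff.1 hV x₁ t₁ hV₁
  obtain ⟨k, hk⟩ := hcov W hW ⟨t₀, ht₀⟩
  obtain ⟨n, _, ⟨x, hx, rfl⟩, hxn⟩ :=
    htr _ B' (hho.iterate k B hB) ⟨_, mem_image_of_mem _ hx₀⟩ hB' ⟨x₁, hx₁⟩
  obtain ⟨s, hn⟩ := exists_iterate_eq_of_surjective hs hhi hf n (h^[k] x) t₁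
  obtain ⟨t, ht, hts⟩ := (hk x).symm ▸ mem_univ s
  have hk' : f^[k] (x, t) = (h^[k] x, s) := Prod.ext ((hs.iterate_right k).eq (x, t)) hts
  refine ⟨n + k, (x, t), hBW ⟨hx, ht⟩, ?_⟩
  rw [mem_preimage, iterate_add_apply, hk', hn]
  exact hBW' ⟨hxn, ht₁⟩

end SkewProduct

theorem AddCircle.exists_coe_image_Ioo_subset {p : ℝ} {W : Set (AddCircle p)}
    (hW : IsOpen W) (hne : W.Nonempty) :
    ∃ a b : ℝ, a < b ∧ ((↑) : ℝ → AddCircle p) '' Ioo a b ⊆ W := by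
  obtain ⟨t, ht⟩ := hne
  obtain ⟨r, rfl⟩ := QuotientAddGroup.mk_surjective t
  obtain ⟨δ, hδ, hball⟩ :=
    Metric.isOpen_iff.1 (hW.preimage (AddCircle.continuous_mk' p)) r ht
  rw [Real.ball_eq_Ioo] at hball
  exact ⟨r - δ, r + δ, by linarith, image_subset_iff.2 hball⟩

theorem AddCircle.coe_image_Ioo_half_ne_univ {p : ℝ} [Fact (0 < p)] :
    ((↑) : ℝ → AddCircle p) '' Ioo 0 (p / 2) ≠ univ := by
  intro hcover
  have hp : 0 < p := Fact.out
  obtain ⟨r, hr, hre⟩ := hcover.symm ▸ mem_univ ((3 * p / 4 : ℝ) : AddCircle p)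
  have hr' : r ∈ Ico 0 (0 + p) := ⟨hr.1.le, by linarith [hr.2]⟩
  have h34 : 3 * p / 4 ∈ Ico 0 (0 + p) := ⟨by positivity, by linarith⟩
  have := (AddCircle.coe_eq_coe_iff_of_mem_Ico hr' h34).1 hre
  linarith [hr.2]

/-- Let `f = (h, g)` be a skew-product on `𝕋^{n-1} × 𝕋¹` with `h` a transitive
homeomorphism, and suppose that for every interval length `ε > 0` there is a uniform
time `k` after which the `f`-iterate of any fiber segment `{x} × I` (with `I` an
interval of length at least `ε`) covers the whole fiber. Then `f` is transitive. -/
theorem skew_product_transitive_of_uniform_fiber_covering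
    (m : ℕ)
    (h : (Fin m → AddCircle (1 : ℝ)) ≃ₜ (Fin m → AddCircle (1 : ℝ)))
    (g : (Fin m → AddCircle (1 : ℝ)) → AddCircle (1 : ℝ) → AddCircle (1 : ℝ))
    (f : (Fin m → AddCircle (1 : ℝ)) × AddCircle (1 : ℝ) →
         (Fin m → AddCircle (1 : ℝ)) × AddCircle (1 : ℝ))
    (hf : ∀ x t, f (x, t) = (h x, g x t))
    (hcont : Continuous f)
    (htrans : ∃ x, Dense (Set.range fun k : ℕ => (⇑h)^[k] x))
    (hfibers : ∀ ε : ℝ, 0 < ε → ∃ k : ℕ,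
      ∀ (x : Fin m → AddCircle (1 : ℝ)) (a b : ℝ), ε ≤ b - a →
        (fun t : AddCircle (1 : ℝ) => (f^[k] (x, t)).2) ''
            ((fun r : ℝ => (r : AddCircle (1 : ℝ))) '' Set.Ioo a b) = Set.univ) :
    ∃ z, Dense (Set.range fun k : ℕ => f^[k] z) := by
  have hs : Semiconj Prod.fst f h := fun p => by simp [hf]
  have hcov : ∀ W : Set (AddCircle (1 : ℝ)), IsOpen W → W.Nonempty →
      ∃ k : ℕ, ∀ x, (fun t => (f^[k] (x, t)).2) '' W = univ := by
    intro W hW hne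
    obtain ⟨a, b, hab, hIW⟩ := AddCircle.exists_coe_image_Ioo_subset hW hne
    obtain ⟨k, hk⟩ := hfibers (b - a) (sub_pos.2 hab)
    exact ⟨k, fun x => eq_univ_of_univ_subset ((hk x a b le_rfl).symm ▸ image_mono hIW)⟩
  obtain ⟨k, hk⟩ := hfibers (1 / 2) (by norm_num)
  have hhalf x := hk x 0 (1 / 2) (by norm_num)
  have hk0 : k ≠ 0 := by
    rintro rfl
    exact AddCircle.coe_image_Ioo_half_ne_univ (p := 1) (by simpa using hhalf 0)
  have hsurj : Surjective f := surjective_of_surjective_fiber_iterate hs h.surjective hk0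
    fun x => range_eq_univ.1 (eq_univ_of_univ_subset (hhalf x ▸ image_subset_range _ _))
  obtain ⟨w, hw⟩ := htrans
  have hbase := isTopologicallyTransitive_of_dense_orbit h.continuous h.surjective hw
  exact (isTopologicallyTransitive_of_fiber_covering hs hbase h.isOpenMap h.injective hsurj
    hcov).exists_dense_orbit hcont
end
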